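/- arXiv:math/9904066 — 5 statements merged into one kernel-verified Lean document; each statement's English description precedes it below -/
import Mathlib

section
/- Let d ≥ 1, let f, g : ℝ^d → ℝ be nonnegative integrable functions with ∫ f = ∫ g = 1, and let Λ ⊆ ℝ^d be countable. If both f + Λ and g + Λ are packings of ℝ^d, then f + Λ is a tiling of ℝ^d at level 1 if and only if g + Λ is a tiling of ℝ^d at level 1. -/
/-!
Write `P h = ∑_{λ ∈ Λ} h(· - λ)` for the `Λ`-periodization. Exchanging sum and integral and
substituting `t ↦ x - λ - t` gives the symmetry `∫ f(t) P g(x - t) dt = ∫ g(t) P f(x - t) dt`.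
If `P f = 1` a.e., the right side is `∫ g = 1 = ∫ f`, so `∫ f(t) (1 - P g(x - t)) dt = 0` for
every `x`, with a nonnegative integrand because `g + Λ` is a packing. Integrating in `x` and
using Tonelli gives `∫ f · ∫ (1 - P g) = 0`, hence `P g = 1` a.e.
-/

open MeasureTheory Real Complex Filter Topology Metric Set Bornology ComplexConjugate
open scoped FourierTransform ENNReal RealInnerProductSpace ContDiff Classical Pointwise

noncomputable section

/-- The exponential `e_λ(x) = exp(2πi⟨λ,x⟩)`. -/
def expChar {d : ℕ} (l x : EuclideanSpace ℝ (Fin d)) : ℂ :=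
  Complex.exp (((2 * Real.pi * ⟪l, x⟫ : ℝ) : ℂ) * Complex.I)

/-- The Fourier transform `𝓕f(ξ) = ∫ f(x) e^{-2πi⟨ξ,x⟩} dx` of a real-valued function. -/
def ftR {d : ℕ} (f : EuclideanSpace ℝ (Fin d) → ℝ) : EuclideanSpace ℝ (Fin d) → ℂ :=
  𝓕 (fun x => (f x : ℂ))

/-- The Fourier transform of the indicator function of a set `Ω ⊆ ℝ^d`. -/
def ftInd {d : ℕ} (Ω : Set (EuclideanSpace ℝ (Fin d))) : EuclideanSpace ℝ (Fin d) → ℂ :=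
  𝓕 (Ω.indicator fun _ => (1 : ℂ))

/-- `f + Λ` is a packing of `ℝ^d`: `∑_{λ∈Λ} f(x-λ) ≤ 1` for a.e. `x`. -/
def packs {d : ℕ} (f : EuclideanSpace ℝ (Fin d) → ℝ) (Λ : Set (EuclideanSpace ℝ (Fin d))) : Prop :=
  ∀ᵐ x : EuclideanSpace ℝ (Fin d),
    ∑' l : Λ, ENNReal.ofReal (f (x - (l : EuclideanSpace ℝ (Fin d)))) ≤ 1

/-- `f + Λ` is a tiling of `ℝ^d` at level `ℓ`: `∑_{λ∈Λ} f(x-λ) = ℓ` for a.e. `x`. -/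
def tilesAt {d : ℕ} (f : EuclideanSpace ℝ (Fin d) → ℝ) (Λ : Set (EuclideanSpace ℝ (Fin d)))
    (ℓ : ℝ) : Prop :=
  ∀ᵐ x : EuclideanSpace ℝ (Fin d),
    ∑' l : Λ, ENNReal.ofReal (f (x - (l : EuclideanSpace ℝ (Fin d)))) = ENNReal.ofReal ℓ

def periodization {G : Type*} [Sub G] (Λ : Set G) (φ : G → ℝ≥0∞) (x : G) : ℝ≥0∞ :=
  ∑' l : Λ, φ (x - l)

section Periodization

variable {G : Type*} [MeasurableSpace G] [AddCommGroup G] [MeasurableAdd₂ G] {μ : Measure G}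
  [μ.IsAddLeftInvariant] {Λ : Set G} {φ ψ u : G → ℝ≥0∞}

lemma aemeasurable_periodization [Countable Λ] (hφ : AEMeasurable φ μ) :
    AEMeasurable (periodization Λ φ) μ :=
  AEMeasurable.tsum fun l => hφ.comp_quasiMeasurePreserving
    (measurePreserving_sub_right μ (l : G)).quasiMeasurePreserving

variable [MeasurableNeg G] [μ.IsNegInvariant]

lemma lintegral_mul_periodization [Countable Λ] (hφ : AEMeasurable φ μ) (hψ : AEMeasurable ψ μ)
    (x : G) :
    ∫⁻ t, φ t * periodization Λ ψ (x - t) ∂μ = ∑' l : Λ, ∫⁻ t, φ t * ψ (x - l - t) ∂μ := by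
  have hψ_shift (l : Λ) : AEMeasurable (fun t => ψ (x - l - t)) μ :=
    hψ.comp_quasiMeasurePreserving
      (Measure.measurePreserving_sub_left μ (x - l)).quasiMeasurePreserving
  rw [← lintegral_tsum (f := fun (l : Λ) t => φ t * ψ (x - l - t)) fun l => hφ.mul (hψ_shift l)]
  refine lintegral_congr fun t => ?_
  simp only [periodization, ← ENNReal.tsum_mul_left, sub_right_comm]

lemma lintegral_mul_periodization_comm [Countable Λ] (hφ : AEMeasurable φ μ)
    (hψ : AEMeasurable ψ μ) (x : G) :
    ∫⁻ t, φ t * periodization Λ ψ (x - t) ∂μ = ∫⁻ t, ψ t * periodization Λ φ (x - t) ∂μ := by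
  rw [lintegral_mul_periodization hφ hψ, lintegral_mul_periodization hψ hφ]
  refine tsum_congr fun l => ?_
  rw [← lintegral_sub_left_eq_self _ (x - l)]
  simp only [sub_sub_cancel, mul_comm]

lemma lintegral_mul_comp_sub_of_ae_eq_one (hu : ∀ᵐ y ∂μ, u y = 1) (x : G) :
    ∫⁻ t, φ t * u (x - t) ∂μ = ∫⁻ t, φ t ∂μ := by
  refine lintegral_congr_ae ?_
  filter_upwards [(Measure.measurePreserving_sub_left μ x).quasiMeasurePreserving.ae hu]
    with t ht
  rw [ht, mul_one]

variable [SFinite μ]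

lemma ae_eq_one_of_lintegral_mul_comp_sub (hφ : AEMeasurable φ μ) (hu : AEMeasurable u μ)
    (hφ0 : ∫⁻ t, φ t ∂μ ≠ 0) (hφtop : ∫⁻ t, φ t ∂μ ≠ ⊤) (hu1 : ∀ᵐ y ∂μ, u y ≤ 1)
    (h : ∀ᵐ x ∂μ, ∫⁻ t, φ t * u (x - t) ∂μ = ∫⁻ t, φ t ∂μ) :
    ∀ᵐ y ∂μ, u y = 1 := by
  have hu_shift (x : G) : AEMeasurable (fun t => u (x - t)) μ :=
    hu.comp_quasiMeasurePreserving (Measure.measurePreserving_sub_left μ x).quasiMeasurePreserving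
  have hdefect : ∀ᵐ x ∂μ, ∫⁻ t, φ t * (1 - u (x - t)) ∂μ = 0 := by
    filter_upwards [h] with x hx
    have hsplit : ∫⁻ t, φ t * u (x - t) ∂μ + ∫⁻ t, φ t * (1 - u (x - t)) ∂μ
        = ∫⁻ t, φ t ∂μ + 0 := by
      rw [← lintegral_add_left' (f := fun t => φ t * u (x - t)) (hφ.mul (hu_shift x)), add_zero]
      refine lintegral_congr_ae ?_
      filter_upwards [(Measure.measurePreserving_sub_left μ x).quasiMeasurePreserving.ae hu1]
        with t ht
      rw [← mul_add, add_tsub_cancel_of_le ht, mul_one]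
    rwa [hx, ENNReal.add_right_inj hφtop] at hsplit
  have hjoint : AEMeasurable (Function.uncurry fun x t => φ t * (1 - u (x - t))) (μ.prod μ) :=
    (hφ.comp_quasiMeasurePreserving Measure.quasiMeasurePreserving_snd).mul
      (aemeasurable_const.sub
        (hu.comp_quasiMeasurePreserving (quasiMeasurePreserving_sub_of_right_invariant μ μ)))
  have hmass : (∫⁻ t, φ t ∂μ) * ∫⁻ y, (1 - u y) ∂μ = 0 := by
    calc (∫⁻ t, φ t ∂μ) * ∫⁻ y, (1 - u y) ∂μ
        = ∫⁻ t, ∫⁻ x, φ t * (1 - u (x - t)) ∂μ ∂μ := by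
          rw [← lintegral_mul_const'' _ hφ]
          congr 1 with t
          have hshift : AEMeasurable (fun x => 1 - u (x - t)) μ :=
            (aemeasurable_const.sub hu).comp_quasiMeasurePreserving
              (measurePreserving_sub_right μ t).quasiMeasurePreserving
          rw [lintegral_const_mul'' (f := fun x => 1 - u (x - t)) _ hshift,
            lintegral_sub_right_eq_self (fun y => 1 - u y) t]
      _ = ∫⁻ x, ∫⁻ t, φ t * (1 - u (x - t)) ∂μ ∂μ := (lintegral_lintegral_swap hjoint).symm
      _ = 0 := (lintegral_congr_ae hdefect).trans lintegral_zero
  have hgap : ∀ᵐ y ∂μ, 1 - u y = 0 :=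
    (lintegral_eq_zero_iff' (aemeasurable_const.sub hu)).mp
      ((mul_eq_zero.mp hmass).resolve_left hφ0)
  filter_upwards [hgap, hu1] with y hy hy1
  exact le_antisymm hy1 (tsub_eq_zero_iff_le.mp hy)

lemma ae_periodization_eq_one_of_tiling_of_packing [Countable Λ] (hφ : AEMeasurable φ μ)
    (hψ : AEMeasurable ψ μ) (hφ0 : ∫⁻ t, φ t ∂μ ≠ 0) (hφtop : ∫⁻ t, φ t ∂μ ≠ ⊤)
    (hmass : ∫⁻ t, ψ t ∂μ = ∫⁻ t, φ t ∂μ) (htile : ∀ᵐ y ∂μ, periodization Λ φ y = 1)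
    (hpack : ∀ᵐ y ∂μ, periodization Λ ψ y ≤ 1) :
    ∀ᵐ y ∂μ, periodization Λ ψ y = 1 := by
  refine ae_eq_one_of_lintegral_mul_comp_sub hφ (aemeasurable_periodization hψ) hφ0 hφtop hpack
    (ae_of_all _ fun x => ?_)
  rw [lintegral_mul_periodization_comm hφ hψ, lintegral_mul_comp_sub_of_ae_eq_one htile, hmass]

end Periodization

lemma lintegral_ofReal_eq_one {α : Type*} [MeasurableSpace α] {μ : Measure α} {f : α → ℝ}
    (hf0 : 0 ≤ᵐ[μ] f) (hfi : Integrable f μ) (hf1 : ∫ x, f x ∂μ = 1) :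
    ∫⁻ x, ENNReal.ofReal (f x) ∂μ = 1 := by
  rw [← ofReal_integral_eq_lintegral_ofReal hfi hf0, hf1, ENNReal.ofReal_one]

lemma tilesAt_one_iff {d : ℕ} (f : EuclideanSpace ℝ (Fin d) → ℝ)
    (Λ : Set (EuclideanSpace ℝ (Fin d))) :
    tilesAt f Λ 1 ↔ ∀ᵐ x, periodization Λ (fun y => ENNReal.ofReal (f y)) x = 1 := by
  rw [tilesAt, ENNReal.ofReal_one]
  rfl

lemma tilesAt_one_of_tilesAt_one_of_packs {d : ℕ} {f g : EuclideanSpace ℝ (Fin d) → ℝ}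
    (hf0 : ∀ x, 0 ≤ f x) (hg0 : ∀ x, 0 ≤ g x) (hfi : Integrable f) (hgi : Integrable g)
    (hf1 : ∫ x, f x = 1) (hg1 : ∫ x, g x = 1) {Λ : Set (EuclideanSpace ℝ (Fin d))}
    (hΛ : Λ.Countable) (hpg : packs g Λ) (htf : tilesAt f Λ 1) : tilesAt g Λ 1 := by
  have : Countable Λ := hΛ.to_subtype
  have hfL := lintegral_ofReal_eq_one (ae_of_all _ hf0) hfi hf1
  have hgL := lintegral_ofReal_eq_one (ae_of_all _ hg0) hgi hg1
  rw [tilesAt_one_iff] at htf ⊢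
  exact ae_periodization_eq_one_of_tiling_of_packing hfi.aemeasurable.ennreal_ofReal
    hgi.aemeasurable.ennreal_ofReal (by simp [hfL]) (by simp [hfL]) (hgL.trans hfL.symm) htf hpg

theorem tiling_from_packing_general {d : ℕ}
    (f g : EuclideanSpace ℝ (Fin d) → ℝ)
    (hf0 : ∀ x, 0 ≤ f x) (hg0 : ∀ x, 0 ≤ g x)
    (hfi : Integrable f) (hgi : Integrable g)
    (hf1 : (∫ x, f x) = 1) (hg1 : (∫ x, g x) = 1)
    (Λ : Set (EuclideanSpace ℝ (Fin d))) (hΛ : Λ.Countable)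
    (hpf : packs f Λ) (hpg : packs g Λ) :
    tilesAt f Λ 1 ↔ tilesAt g Λ 1 :=
  ⟨tilesAt_one_of_tilesAt_one_of_packs hf0 hg0 hfi hgi hf1 hg1 hΛ hpg,
    tilesAt_one_of_tilesAt_one_of_packs hg0 hf0 hgi hfi hg1 hf1 hΛ hpf⟩

/-- If `f, g ≥ 0` are integrable with `∫f = ∫g = 1` and both `f + Λ` and `g + Λ` are
packings of `ℝ^d`, then `f + Λ` is a tiling (at level 1) iff `g + Λ` is a tiling. -/
theorem tiling_from_packing {d : ℕ} (hd : 1 ≤ d)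
    (f g : EuclideanSpace ℝ (Fin d) → ℝ)
    (hf0 : ∀ x, 0 ≤ f x) (hg0 : ∀ x, 0 ≤ g x)
    (hfi : Integrable f) (hgi : Integrable g)
    (hf1 : (∫ x, f x) = 1) (hg1 : (∫ x, g x) = 1)
    (Λ : Set (EuclideanSpace ℝ (Fin d))) (hΛ : Λ.Countable)
    (hpf : packs f Λ) (hpg : packs g Λ) :
    tilesAt f Λ 1 ↔ tilesAt g Λ 1 :=
  tiling_from_packing_general f g hf0 hg0 hfi hgi hf1 hg1 Λ hΛ hpf hpg
end
end

section
/- Let Ω ⊆ ℝ^d be a measurable set of Lebesgue measure 1 and Λ ⊆ ℝ^d countable. The family of exponentials E_Λ = {e_λ : λ ∈ Λ} is an orthogonal set in L²(Ω) (i.e., ⟨e_λ, e_μ⟩_Ω = 0 for all λ ≠ μ in Λ) if and only if |𝓕1_Ω|² + Λ is a packing of ℝ^d, i.e., ∑_{λ∈Λ} |𝓕1_Ω(x−λ)|² ≤ 1 for every x ∈ ℝ^d. -/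
/-!
Since `⟨e_λ, e_μ⟩_Ω = 𝓕1_Ω(μ - λ)` and `𝓕1_Ω(0) = |Ω| = 1`, orthogonality makes `(e_λ)_{λ ∈ Λ}`
an orthonormal family in `L²(Ω)`, and Bessel's inequality applied to `e_x` gives
`∑_λ |𝓕1_Ω(x - λ)|² = ∑_λ |⟨e_x, e_λ⟩_Ω|² ≤ ‖e_x‖² = 1`. Conversely, at `x = μ ∈ Λ` the term
`λ = μ` of the packing sum is already `|𝓕1_Ω(0)|² = 1`, so every other term vanishes.
-/

open MeasureTheory Real Complex Filter Topology Metric Set Bornology ComplexConjugate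
open scoped FourierTransform ENNReal RealInnerProductSpace ContDiff Classical Pointwise

noncomputable section

theorem Orthonormal.tsum_ofReal_norm_inner_sq_le {𝕜 E ι : Type*} [RCLike 𝕜]
    [NormedAddCommGroup E] [InnerProductSpace 𝕜 E] {v : ι → E} (hv : Orthonormal 𝕜 v) (x : E) :
    ∑' i, ENNReal.ofReal (‖inner 𝕜 x (v i)‖ ^ 2) ≤ ENNReal.ofReal (‖x‖ ^ 2) := by
  simp only [norm_inner_symm x]
  rw [← ENNReal.ofReal_tsum_of_nonneg (fun _ => by positivity) (hv.inner_products_summable x)]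
  exact ENNReal.ofReal_le_ofReal (hv.tsum_inner_products_le x)

theorem ENNReal.eq_zero_of_tsum_le_one {ι : Type*} {f : ι → ℝ≥0∞} (hf : ∑' i, f i ≤ 1)
    {i j : ι} (hj : f j = 1) (hij : i ≠ j) : f i = 0 := by
  have hpair : f i + f j ≤ 1 := by
    rw [← Finset.sum_pair hij]
    exact (ENNReal.sum_le_tsum _).trans hf
  rw [hj] at hpair
  exact nonpos_iff_eq_zero.mp <|
    (ENNReal.add_le_add_iff_right one_ne_top).mp (by simpa using hpair)

section Exponentials

variable {d : ℕ}

theorem norm_expChar (l x : EuclideanSpace ℝ (Fin d)) : ‖expChar l x‖ = 1 := by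
  simp [expChar, Complex.norm_exp]

theorem continuous_expChar (l : EuclideanSpace ℝ (Fin d)) : Continuous (expChar l) := by
  unfold expChar
  fun_prop

theorem memLp_expChar (μ : Measure (EuclideanSpace ℝ (Fin d))) [IsFiniteMeasure μ]
    (p : ℝ≥0∞) (l : EuclideanSpace ℝ (Fin d)) : MemLp (expChar l) p μ :=
  (memLp_top_of_bound (continuous_expChar l).aestronglyMeasurable 1
    (Eventually.of_forall fun x => (norm_expChar l x).le)).mono_exponent le_top

theorem expChar_mul_conj_expChar (l m x : EuclideanSpace ℝ (Fin d)) :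
    expChar l x * conj (expChar m x) =
      Complex.exp (((-2 * Real.pi * ⟪x, m - l⟫ : ℝ) : ℂ) * Complex.I) := by
  rw [expChar, expChar, ← Complex.exp_conj, ← Complex.exp_add, map_mul, Complex.conj_I,
    Complex.conj_ofReal, inner_sub_right, real_inner_comm x m, real_inner_comm x l]
  congr 1
  push_cast
  ring

theorem ftInd_eq_setIntegral {Ω : Set (EuclideanSpace ℝ (Fin d))} (hΩ : MeasurableSet Ω)
    (ξ : EuclideanSpace ℝ (Fin d)) :
    ftInd Ω ξ = ∫ x in Ω, Complex.exp (((-2 * Real.pi * ⟪x, ξ⟫ : ℝ) : ℂ) * Complex.I) := by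
  rw [ftInd, Real.fourier_eq', ← integral_indicator hΩ]
  congr 1
  ext x
  by_cases hx : x ∈ Ω <;> simp [hx]

theorem setIntegral_expChar_mul_conj {Ω : Set (EuclideanSpace ℝ (Fin d))} (hΩ : MeasurableSet Ω)
    (l m : EuclideanSpace ℝ (Fin d)) :
    ∫ x in Ω, expChar l x * conj (expChar m x) = ftInd Ω (m - l) := by
  simp only [expChar_mul_conj_expChar, ftInd_eq_setIntegral hΩ]

theorem ftInd_zero {Ω : Set (EuclideanSpace ℝ (Fin d))} (hΩ : MeasurableSet Ω) :
    ftInd Ω 0 = volume.real Ω := by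
  simp [ftInd_eq_setIntegral hΩ]

def expCharLp (μ : Measure (EuclideanSpace ℝ (Fin d))) [IsFiniteMeasure μ]
    (l : EuclideanSpace ℝ (Fin d)) : Lp ℂ 2 μ :=
  (memLp_expChar μ 2 l).toLp _

theorem inner_expCharLp (μ : Measure (EuclideanSpace ℝ (Fin d))) [IsFiniteMeasure μ]
    (l m : EuclideanSpace ℝ (Fin d)) :
    inner ℂ (expCharLp μ l) (expCharLp μ m) = ∫ x, expChar m x * conj (expChar l x) ∂μ := by
  rw [L2.inner_def]
  refine integral_congr_ae ?_
  filter_upwards [(memLp_expChar μ 2 l).coeFn_toLp, (memLp_expChar μ 2 m).coeFn_toLp]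
    with x hl hm
  rw [expCharLp, expCharLp, hl, hm, RCLike.inner_apply, mul_comm]

theorem inner_expCharLp_restrict {Ω : Set (EuclideanSpace ℝ (Fin d))} (hΩ : MeasurableSet Ω)
    [IsFiniteMeasure (volume.restrict Ω)] (l m : EuclideanSpace ℝ (Fin d)) :
    inner ℂ (expCharLp (volume.restrict Ω) l) (expCharLp (volume.restrict Ω) m) =
      ftInd Ω (l - m) := by
  rw [inner_expCharLp, setIntegral_expChar_mul_conj hΩ]

theorem norm_expCharLp_restrict {Ω : Set (EuclideanSpace ℝ (Fin d))} (hΩ : MeasurableSet Ω)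
    (hΩ1 : volume Ω = 1) [IsFiniteMeasure (volume.restrict Ω)] (l : EuclideanSpace ℝ (Fin d)) :
    ‖expCharLp (volume.restrict Ω) l‖ = 1 := by
  rw [@norm_eq_sqrt_re_inner ℂ, inner_expCharLp_restrict hΩ, sub_self, ftInd_zero hΩ]
  simp [measureReal_def, hΩ1]

theorem orthonormal_expCharLp {Ω : Set (EuclideanSpace ℝ (Fin d))} (hΩ : MeasurableSet Ω)
    (hΩ1 : volume Ω = 1) [IsFiniteMeasure (volume.restrict Ω)]
    {Λ : Set (EuclideanSpace ℝ (Fin d))} (hΛ : Λ.Pairwise fun l m => ftInd Ω (m - l) = 0) :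
    Orthonormal ℂ fun l : Λ => expCharLp (volume.restrict Ω) l := by
  refine ⟨fun l => norm_expCharLp_restrict hΩ hΩ1 l, fun l m hlm => ?_⟩
  simp only [inner_expCharLp_restrict hΩ]
  exact hΛ m.2 l.2 fun h => hlm (Subtype.ext h.symm)

end Exponentials

theorem orthogonal_iff_packing_general {d : ℕ} (Ω : Set (EuclideanSpace ℝ (Fin d)))
    (hΩm : MeasurableSet Ω) (hΩ1 : volume Ω = 1)
    (Λ : Set (EuclideanSpace ℝ (Fin d))) :
    (∀ l ∈ Λ, ∀ m ∈ Λ, l ≠ m →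
      (∫ x in Ω, expChar l x * conj (expChar m x)) = 0) ↔
    (∀ x : EuclideanSpace ℝ (Fin d),
      ∑' l : Λ, ENNReal.ofReal (‖ftInd Ω (x - (l : EuclideanSpace ℝ (Fin d)))‖ ^ 2) ≤ 1) := by
  have : IsFiniteMeasure (volume.restrict Ω) := isFiniteMeasure_restrict.mpr (by simp [hΩ1])
  have hnorm_zero : ‖ftInd Ω 0‖ = 1 := by simp [ftInd_zero hΩm, measureReal_def, hΩ1]
  simp only [setIntegral_expChar_mul_conj hΩm]
  constructor
  · intro hΛ x
    have hBessel := (orthonormal_expCharLp hΩm hΩ1 hΛ).tsum_ofReal_norm_inner_sq_le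
      (expCharLp (volume.restrict Ω) x)
    simpa [inner_expCharLp_restrict hΩm, norm_expCharLp_restrict hΩm hΩ1] using hBessel
  · intro hpack l hl m hm hlm
    have h := ENNReal.eq_zero_of_tsum_le_one (hpack m) (i := ⟨l, hl⟩) (j := ⟨m, hm⟩)
      (by simp [hnorm_zero]) (by simpa using hlm)
    simpa using h

/-- The exponentials `e_λ`, `λ ∈ Λ`, are pairwise orthogonal in `L²(Ω)` if and only if
`|𝓕1_Ω|² + Λ` is a packing of `ℝ^d`, i.e. `∑_{λ∈Λ} |𝓕1_Ω(x-λ)|² ≤ 1` for every `x`. -/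
theorem orthogonal_iff_packing {d : ℕ} (Ω : Set (EuclideanSpace ℝ (Fin d)))
    (hΩm : MeasurableSet Ω) (hΩ1 : volume Ω = 1)
    (Λ : Set (EuclideanSpace ℝ (Fin d))) (hΛ : Λ.Countable) :
    (∀ l ∈ Λ, ∀ m ∈ Λ, l ≠ m →
      (∫ x in Ω, expChar l x * conj (expChar m x)) = 0) ↔
    (∀ x : EuclideanSpace ℝ (Fin d),
      ∑' l : Λ, ENNReal.ofReal (‖ftInd Ω (x - (l : EuclideanSpace ℝ (Fin d)))‖ ^ 2) ≤ 1) :=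
  orthogonal_iff_packing_general Ω hΩm hΩ1 Λ
end
end

section
/- Let f : ℝ^d → ℝ be nonnegative and integrable with 𝓕f infinitely differentiable, let Λ ⊆ ℝ^d be a discrete set of uniformly bounded density, and suppose f + Λ is a tiling of ℝ^d at some level ℓ (i.e., ∑_{λ∈Λ} f(x−λ) = ℓ for a.e. x). Then for every smooth compactly supported φ : ℝ^d → ℂ whose support is disjoint from {ξ : 𝓕f(ξ) = 0} ∪ {0}, one has ∑_{λ∈Λ} 𝓕φ(λ) = 0 (the series converging absolutely). -/
open MeasureTheory Real Complex Filter Topology Metric Set Bornology ComplexConjugate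
open scoped FourierTransform ENNReal RealInnerProductSpace ContDiff Classical Pointwise

noncomputable section

/-- `Λ` has (uniformly) bounded density: there is `ρ` with
`#(Λ ∩ B_R(x)) ≤ ρ·|B_R(x)|` for all `x` and all `R > 1`. -/
def boundedDensity {d : ℕ} (Λ : Set (EuclideanSpace ℝ (Fin d))) : Prop :=
  ∃ ρ : ℝ, ∀ (x : EuclideanSpace ℝ (Fin d)) (R : ℝ), 1 < R →
    (Λ ∩ Metric.ball x R).Finite ∧
    (Nat.card ↥(Λ ∩ Metric.ball x R) : ℝ) ≤ ρ * (volume (Metric.ball x R)).toReal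

/-! Write `φ = 𝓕f · g`: since `𝓕f` is smooth and does not vanish on `supp φ`, the quotient
`g = φ / 𝓕f` is smooth with compact support, hence a Schwartz function, and `g(0) = 0`. Moving
`𝓕` across the product gives `𝓕φ(λ) = ∫ f(x - λ) 𝓕g(x) dx`. Summing over `Λ` and exchanging sum
and integral (Tonelli, the periodization of `f` being the constant `ℓ`) yields
`∑_λ 𝓕φ(λ) = ℓ ∫ 𝓕g = ℓ g(0) = 0`. -/

theorem boundedDensity.countable {d : ℕ} {Λ : Set (EuclideanSpace ℝ (Fin d))}
    (hΛ : boundedDensity Λ) : Λ.Countable := by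
  obtain ⟨ρ, hρ⟩ := hΛ
  have hcover : Λ ⊆ ⋃ n : ℕ, Λ ∩ ball 0 (n + 2) := fun x hx =>
    let ⟨n, hn⟩ := exists_nat_gt (dist x 0)
    mem_iUnion.2 ⟨n, hx, mem_ball.2 (by linarith)⟩
  exact (countable_iUnion fun n : ℕ =>
    (hρ 0 (n + 2) (by linarith [n.cast_nonneg (α := ℝ)])).1.countable).mono hcover

-- `ENNReal.ofReal` truncates a negative level to `0`.
theorem tilesAt.ae_hasSum {d : ℕ} {f : EuclideanSpace ℝ (Fin d) → ℝ}
    {Λ : Set (EuclideanSpace ℝ (Fin d))} {ℓ : ℝ} (hf0 : ∀ x, 0 ≤ f x) (h : tilesAt f Λ ℓ) :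
    ∀ᵐ x, HasSum (fun l : Λ => f (x - l)) (max ℓ 0) := by
  filter_upwards [h] with x hx
  have hfin : ∑' l : Λ, ENNReal.ofReal (f (x - l)) ≠ ⊤ := hx ▸ ENNReal.ofReal_ne_top
  have := ENNReal.hasSum_toReal hfin
  rwa [← ENNReal.tsum_toReal_eq fun _ => ENNReal.ofReal_ne_top, hx, ENNReal.toReal_ofReal',
    funext fun l => ENNReal.toReal_ofReal (hf0 _)] at this

theorem ContDiff.div_of_disjoint_tsupport {𝕜 𝕜' E : Type*} [NontriviallyNormedField 𝕜]
    [NormedField 𝕜'] [NormedAlgebra 𝕜 𝕜'] [NormedAddCommGroup E] [NormedSpace 𝕜 E]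
    {φ F : E → 𝕜'} {n : WithTop ℕ∞} (hφ : ContDiff 𝕜 n φ) (hF : ContDiff 𝕜 n F)
    (h : Disjoint (tsupport φ) {x | F x = 0}) : ContDiff 𝕜 n (φ / F) := by
  rw [contDiff_iff_contDiffAt]
  intro x
  by_cases hx : F x = 0
  · have hφx : φ =ᶠ[𝓝 x] 0 := notMem_tsupport_iff_eventuallyEq.1 (disjoint_right.1 h hx)
    refine contDiffAt_const (c := (0 : 𝕜')).congr_of_eventuallyEq ?_
    filter_upwards [hφx] with y hy
    simp [hy]
  · rw [div_eq_mul_inv]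
    exact hφ.contDiffAt.mul (hF.contDiffAt.inv hx)

theorem exists_schwartzMap_eq_mul_of_disjoint_tsupport {𝕜 E : Type*} [RCLike 𝕜]
    [NormedAddCommGroup E] [NormedSpace ℝ E] {φ F : E → 𝕜} (hφ : ContDiff ℝ ∞ φ)
    (hφc : HasCompactSupport φ) (hF : ContDiff ℝ ∞ F) (h : Disjoint (tsupport φ) {x | F x = 0}) :
    ∃ g : SchwartzMap E 𝕜, (φ = fun x => F x * g x) ∧ Function.support g ⊆ Function.support φ := by
  have hφc' : HasCompactSupport (φ / F) := by
    rw [div_eq_mul_inv]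
    exact hφc.mul_right
  refine ⟨hφc'.toSchwartzMap (hφ.div_of_disjoint_tsupport hF h), funext fun x => ?_,
    fun x hx => ((Function.support_div' φ F).le hx).1⟩
  exact (mul_div_cancel_of_imp' fun hFx => image_eq_zero_of_notMem_tsupport
    (disjoint_right.1 h hFx)).symm

section Fourier

variable {V E : Type*} [NormedAddCommGroup V] [InnerProductSpace ℝ V] [FiniteDimensional ℝ V]
  [MeasurableSpace V] [BorelSpace V] [NormedAddCommGroup E] [NormedSpace ℂ E]

theorem fourier_comp_sub_right (f : V → E) (l : V) :
    𝓕 (fun x => f (x - l)) = fun ξ => 𝐞 (-⟪ξ, l⟫) • 𝓕 f ξ := by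
  convert VectorFourier.fourierIntegral_comp_add_right 𝐞 volume (innerₗ V) f (-l) using 1
  · simp only [Function.comp_def, ← sub_eq_add_neg]
    rfl
  · simp [real_inner_comm]
    rfl

theorem fourier_fourier_smul_apply [CompleteSpace E] {f : V → ℂ} {g : V → E}
    (hf : Integrable f) (hg : Integrable g) (l : V) :
    𝓕 (fun ξ => 𝓕 f ξ • g ξ) l = ∫ x, f (x - l) • 𝓕 g x := by
  have hflip : (innerₗ V).flip = innerₗ V := by
    ext x y
    exact real_inner_comm x y
  calc 𝓕 (fun ξ => 𝓕 f ξ • g ξ) l = ∫ ξ, 𝓕 (fun x => f (x - l)) ξ • g ξ := by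
        simp only [Real.fourier_eq (fun ξ => 𝓕 f ξ • g ξ), fourier_comp_sub_right, smul_assoc]
    _ = ∫ x, f (x - l) • 𝓕 g x := by
        have := VectorFourier.integral_fourierIntegral_smul_eq_flip (L := innerₗ V)
          Real.continuous_fourierChar continuous_inner (hf.comp_sub_right l) hg
        rwa [hflip] at this

theorem SchwartzMap.integral_fourier [CompleteSpace E] (g : SchwartzMap V E) :
    ∫ x, 𝓕 (g : V → E) x = g 0 := by
  calc ∫ x, 𝓕 (g : V → E) x = 𝓕⁻ (𝓕 (g : V → E)) 0 := by simp [Real.fourierInv_eq]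
    _ = g 0 := by rw [g.continuous.fourierInv_fourier_eq g.integrable (𝓕 g).integrable]

end Fourier

theorem summable_and_hasSum_integral_smul_of_ae_hasSum {α ι E : Type*} [MeasurableSpace α]
    {μ : Measure α} [Countable ι] [NormedAddCommGroup E] [NormedSpace ℝ E] [CompleteSpace E]
    {F : ι → α → ℝ} {c : ℝ} {ψ : α → E}
    (hF0 : ∀ i x, 0 ≤ F i x) (hFm : ∀ i, AEStronglyMeasurable (F i) μ)
    (hF : ∀ᵐ x ∂μ, HasSum (fun i => F i x) c) (hψ : Integrable ψ μ) :
    Summable (fun i => ‖∫ x, F i x • ψ x ∂μ‖) ∧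
      HasSum (fun i => ∫ x, F i x • ψ x ∂μ) (c • ∫ x, ψ x ∂μ) := by
  have henorm : ∀ i x, ‖F i x • ψ x‖ₑ = ENNReal.ofReal (F i x) * ‖ψ x‖ₑ := fun i x => by
    rw [enorm_smul, Real.enorm_of_nonneg (hF0 i x)]
  have htonelli : ∑' i, ∫⁻ x, ‖F i x • ψ x‖ₑ ∂μ = ENNReal.ofReal c * ∫⁻ x, ‖ψ x‖ₑ ∂μ := by
    simp_rw [henorm]
    rw [← lintegral_tsum fun i => (hFm i).aemeasurable.ennreal_ofReal.fun_mul hψ.1.enorm,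
      ← lintegral_const_mul' _ _ ENNReal.ofReal_ne_top]
    refine lintegral_congr_ae (hF.mono fun x hx => ?_)
    dsimp only
    rw [ENNReal.tsum_mul_right, ← ENNReal.ofReal_tsum_of_nonneg (hF0 · x) hx.summable,
      hx.tsum_eq]
  have hfin : ∑' i, ∫⁻ x, ‖F i x • ψ x‖ₑ ∂μ ≠ ⊤ := by
    rw [htonelli]
    exact ENNReal.mul_ne_top ENNReal.ofReal_ne_top hψ.2.ne
  have hsummable : Summable (fun i => ‖∫ x, F i x • ψ x ∂μ‖) :=
    (ENNReal.summable_toReal hfin).of_nonneg_of_le (fun _ => norm_nonneg _) fun i => by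
      rw [← toReal_enorm]
      exact ENNReal.toReal_mono (ENNReal.ne_top_of_tsum_ne_top hfin i)
        (enorm_integral_le_lintegral_enorm _)
  refine ⟨hsummable, ?_⟩
  convert hsummable.of_norm.hasSum using 1
  have hFψm : ∀ i, AEStronglyMeasurable (fun x => F i x • ψ x) μ := fun i => (hFm i).smul hψ.1
  rw [← integral_tsum hFψm hfin, ← integral_smul]
  exact integral_congr_ae (hF.mono fun x hx => (hx.smul_const (ψ x)).tsum_eq.symm)

/-- If `f ≥ 0` is integrable with `𝓕f` infinitely differentiable, `Λ` is of uniformly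
bounded density, and `f + Λ` tiles `ℝ^d` at some level `ℓ`, then
`supp 𝓕δ_Λ ⊆ {𝓕f = 0} ∪ {0}`: for every smooth compactly supported `φ` whose support
avoids `{𝓕f = 0} ∪ {0}` one has `∑_{λ∈Λ} 𝓕φ(λ) = 0`, the series converging absolutely. -/
theorem tiling_implies_support_smooth {d : ℕ}
    (f : EuclideanSpace ℝ (Fin d) → ℝ)
    (hf0 : ∀ x, 0 ≤ f x) (hfi : Integrable f)
    (hsm : ContDiff ℝ ∞ (ftR f))
    (Λ : Set (EuclideanSpace ℝ (Fin d))) (hbd : boundedDensity Λ)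
    (ℓ : ℝ) (htile : tilesAt f Λ ℓ) :
    ∀ φ : EuclideanSpace ℝ (Fin d) → ℂ, ContDiff ℝ ∞ φ → HasCompactSupport φ →
      Disjoint (tsupport φ) ({ξ | ftR f ξ = 0} ∪ {0}) →
      Summable (fun l : Λ => ‖𝓕 φ (l : EuclideanSpace ℝ (Fin d))‖) ∧
      ∑' l : Λ, 𝓕 φ (l : EuclideanSpace ℝ (Fin d)) = 0 := by
  intro φ hφ hφc hdisj
  have : Countable Λ := hbd.countable.to_subtype
  obtain ⟨g, hφg, hg_supp⟩ := exists_schwartzMap_eq_mul_of_disjoint_tsupport hφ hφc hsm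
    (hdisj.mono_right subset_union_left)
  have hg0 : g 0 = 0 := Function.notMem_support.1 fun h =>
    hg_supp h (image_eq_zero_of_notMem_tsupport (disjoint_right.1 hdisj (.inr rfl)))
  have hfourier : ∀ l : Λ, 𝓕 φ l = ∫ x, f (x - l) • 𝓕 (g : _ → ℂ) x := fun l => by
    rw [hφg]
    refine (fourier_fourier_smul_apply hfi.ofReal g.integrable l).trans ?_
    simp only [smul_eq_mul, Complex.real_smul]
    rfl
  have hψ0 : ∫ x, 𝓕 (g : _ → ℂ) x = 0 := g.integral_fourier.trans hg0
  obtain ⟨hsum, hhas⟩ := summable_and_hasSum_integral_smul_of_ae_hasSum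
    (F := fun (l : Λ) x => f (x - l)) (ψ := 𝓕 (g : _ → ℂ)) (fun _ _ => hf0 _)
    (fun l => (hfi.comp_sub_right (l : EuclideanSpace ℝ (Fin d))).1) (htile.ae_hasSum hf0)
    (𝓕 g).integrable
  rw [hψ0, smul_zero] at hhas
  simp only [hfourier]
  exact ⟨hsum, hhas.tsum_eq⟩
end
end

section
/- (Keller's theorem.) Let Q = (−1/2, 1/2)^d be the open unit cube in ℝ^d and let Λ ⊆ ℝ^d with 0 ∈ Λ be such that Q + Λ is a tiling of ℝ^d at level 1. Then every nonzero λ ∈ Λ has at least one coordinate which is a nonzero integer. -/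
open MeasureTheory Real Complex Filter Topology Metric Set Bornology ComplexConjugate
open scoped FourierTransform ENNReal RealInnerProductSpace ContDiff Classical Pointwise

noncomputable section

/-!
Perron's shifting argument. Along every line in a coordinate direction `i`, the cubes meeting
the line tile it by unit intervals, so their `i`-th coordinates all lie in one coset of `ℤ`.
Hence translating by `t` in direction `i` exactly those cubes whose `i`-th coordinate is an
integer moves, on each such line, either every cube meeting it or none, and the result is still
a tiling. Doing this in every direction `i` with `t = l i` moves the cube at `0` to `l`, while
the cube at `l` stays put unless some coordinate of `l` is a nonzero integer. But two distinct
cubes of a tiling cannot coincide.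
-/

namespace Keller

variable {d : ℕ} {ι : Type*}

def cube (d : ℕ) : Set (EuclideanSpace ℝ (Fin d)) := {x | ∀ j, |x j| < 1 / 2}

lemma sub_mem_cube_iff {x y : EuclideanSpace ℝ (Fin d)} :
    x - y ∈ cube d ↔ ∀ j, |x j - y j| < 1 / 2 := Iff.rfl

lemma isOpen_cube : IsOpen (cube d) := by
  simp only [cube, ofPred_forall]
  exact isOpen_iInter_of_finite fun j =>
    isOpen_lt (continuous_abs.comp ((continuous_apply j).comp (PiLp.continuous_ofLp 2 _)))
      continuous_const

lemma abs_sub_lt_one_of_abs_sub_lt_half {a b c : ℝ} (ha : |c - a| < 1 / 2)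
    (hb : |c - b| < 1 / 2) : |a - b| < 1 := by
  rw [abs_lt] at *
  constructor <;> linarith

def cubeCount (τ : ι → EuclideanSpace ℝ (Fin d)) (x : EuclideanSpace ℝ (Fin d)) : ℝ≥0∞ :=
  ∑' a, (cube d).indicator 1 (x - τ a)

def IsCubeTiling (τ : ι → EuclideanSpace ℝ (Fin d)) : Prop :=
  ∀ᵐ x, cubeCount τ x = 1

lemma measurable_cubeCount [Countable ι] (τ : ι → EuclideanSpace ℝ (Fin d)) :
    Measurable (cubeCount τ) :=
  .tsum fun _ =>
    (measurable_const.indicator isOpen_cube.measurableSet).comp (measurable_id.sub_const _)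

lemma exists_sub_mem_cube_of_cubeCount_eq_one {τ : ι → EuclideanSpace ℝ (Fin d)}
    {x : EuclideanSpace ℝ (Fin d)} (hx : cubeCount τ x = 1) : ∃ a, x - τ a ∈ cube d := by
  by_contra! h
  have : cubeCount τ x = 0 := ENNReal.tsum_eq_zero.mpr fun a => indicator_of_notMem (h a) _
  simp [this] at hx

lemma two_le_cubeCount {τ : ι → EuclideanSpace ℝ (Fin d)} {x : EuclideanSpace ℝ (Fin d)}
    {a b : ι} (hab : a ≠ b) (ha : x - τ a ∈ cube d) (hb : x - τ b ∈ cube d) :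
    2 ≤ cubeCount τ x := by
  have := ENNReal.sum_le_tsum (f := fun c => (cube d).indicator 1 (x - τ c)) {a, b}
  rw [Finset.sum_pair hab, indicator_of_mem ha, indicator_of_mem hb] at this
  simpa [one_add_one_eq_two, cubeCount] using this

namespace IsCubeTiling

variable {τ : ι → EuclideanSpace ℝ (Fin d)}

/-- Otherwise the midpoint of `τ a` and `τ b` lies in both open cubes, and hence so does a set
of positive measure. -/
lemma exists_one_le_abs_sub (hτ : IsCubeTiling τ) {a b : ι} (hab : a ≠ b) :
    ∃ j, 1 ≤ |τ a j - τ b j| := by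
  by_contra! h
  let U := (· - τ a) ⁻¹' cube d ∩ (· - τ b) ⁻¹' cube d
  have hU : IsOpen U := (isOpen_cube.preimage (continuous_sub_right _)).inter
    (isOpen_cube.preimage (continuous_sub_right _))
  have hmid : (2⁻¹ : ℝ) • (τ a + τ b) ∈ U := by
    constructor <;> refine sub_mem_cube_iff.mpr fun j => ?_ <;>
    · have := abs_lt.mp (h j)
      simp only [PiLp.smul_apply, PiLp.add_apply, smul_eq_mul]
      rw [abs_lt]
      constructor <;> linarith
  obtain ⟨x, ⟨hxa, hxb⟩, hx⟩ :=
    Measure.exists_mem_of_measure_ne_zero_of_ae (hU.measure_pos volume ⟨_, hmid⟩).ne'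
      (ae_restrict_of_ae hτ)
  have := two_le_cubeCount hab hxa hxb
  simp [hx] at this

lemma injective (hτ : IsCubeTiling τ) : Function.Injective τ := by
  intro a b hab
  by_contra hne
  obtain ⟨j, hj⟩ := hτ.exists_one_le_abs_sub hne
  norm_num [hab] at hj

lemma countable (hτ : IsCubeTiling τ) : Countable ι := by
  refine Pairwise.countable_of_isOpen_disjoint (s := fun a => (· - τ a) ⁻¹' cube d) ?_
    (fun a => isOpen_cube.preimage (continuous_sub_right _))
    (fun a => ⟨τ a, by simp [cube]⟩)
  intro a b hab
  refine disjoint_left.mpr fun x hxa hxb => ?_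
  obtain ⟨j, hj⟩ := hτ.exists_one_le_abs_sub hab
  exact hj.not_gt (abs_sub_lt_one_of_abs_sub_lt_half (hxa j) (hxb j))

end IsCubeTiling

section OneDimensional

variable {A : Set ℝ}

lemma add_one_mem_of_ae_cover (hsep : A.Pairwise fun a b => 1 ≤ |a - b|)
    (hcov : ∀ᵐ s : ℝ, ∃ a ∈ A, |s - a| < 1 / 2) {a : ℝ} (ha : a ∈ A) : a + 1 ∈ A := by
  have near : ∀ ε > 0, ∃ c ∈ A, a + 1 ≤ c ∧ c < a + 1 + ε := by
    intro ε hε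
    obtain ⟨s, ⟨hs₁, hs₂⟩, c, hc, hsc⟩ := Measure.exists_mem_of_measure_ne_zero_of_ae
      (s := Ioo (a + 1 / 2) (a + 1 / 2 + ε)) (by simp [hε]) (ae_restrict_of_ae hcov)
    rw [abs_lt] at hsc
    have hac : a < c := by linarith
    have : 1 ≤ |a - c| := hsep ha hc hac.ne
    rw [abs_sub_comm, abs_of_pos (sub_pos.mpr hac)] at this
    exact ⟨c, hc, by linarith, by linarith⟩
  obtain ⟨c, hc, hc₁, hc₂⟩ := near (1 / 2) (by norm_num)
  suffices c ≤ a + 1 from le_antisymm this hc₁ ▸ hc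
  refine le_of_forall_pos_lt_add fun δ hδ => ?_
  obtain ⟨c', hc', hc'₁, hc'₂⟩ := near (min δ (1 / 2)) (by positivity)
  have hmin₁ := min_le_left δ (1 / 2)
  have hmin₂ := min_le_right δ (1 / 2)
  have : c = c' := by
    by_contra hne
    have := hsep hc hc' hne
    have : |c - c'| < 1 := abs_sub_lt_iff.mpr ⟨by linarith, by linarith⟩
    linarith
  linarith

lemma fract_eq_of_ae_cover (hsep : A.Pairwise fun a b => 1 ≤ |a - b|)
    (hcov : ∀ᵐ s : ℝ, ∃ a ∈ A, |s - a| < 1 / 2) {a b : ℝ} (ha : a ∈ A) (hb : b ∈ A) :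
    Int.fract a = Int.fract b := by
  have add_nat_mem : ∀ {x}, x ∈ A → ∀ n : ℕ, x + n ∈ A := by
    intro x hx n
    induction n with
    | zero => simpa
    | succ n ih => simpa [add_assoc] using add_one_mem_of_ae_cover hsep hcov ih
  obtain ⟨m, hm⟩ := exists_nat_ge (a - b)
  set k := ⌊b + m - a⌋₊
  have hk : a + k = b + m := by
    by_contra hne
    have := hsep (add_nat_mem ha k) (add_nat_mem hb m) hne
    have := Nat.floor_le (show 0 ≤ b + m - a by linarith)
    have := Nat.lt_floor_add_one (b + m - a)
    have : |a + k - (b + m)| < 1 := abs_sub_lt_iff.mpr ⟨by linarith, by linarith⟩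
    linarith
  calc Int.fract a = Int.fract (a + k) := (Int.fract_add_natCast a k).symm
    _ = Int.fract (b + m) := by rw [hk]
    _ = Int.fract b := Int.fract_add_natCast b m

end OneDimensional

section Slices

variable {n : ℕ}

def insertCoord (i : Fin (n + 1)) (s : ℝ) (y : Fin n → ℝ) : EuclideanSpace ℝ (Fin (n + 1)) :=
  WithLp.toLp 2 (Fin.insertNth i s y)

@[simp]
lemma insertCoord_apply_same (i : Fin (n + 1)) (s : ℝ) (y : Fin n → ℝ) :
    insertCoord i s y i = s := by
  simp [insertCoord]

@[simp]
lemma insertCoord_apply_succAbove (i : Fin (n + 1)) (s : ℝ) (y : Fin n → ℝ) (k : Fin n) :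
    insertCoord i s y (i.succAbove k) = y k := by
  simp [insertCoord]

lemma insertCoord_sub_single (i : Fin (n + 1)) (s : ℝ) (y : Fin n → ℝ) (c : ℝ) :
    insertCoord i s y - EuclideanSpace.single i c = insertCoord i (s - c) y := by
  ext j
  rcases Fin.eq_self_or_eq_succAbove i j with rfl | ⟨k, rfl⟩ <;>
    simp [Fin.succAbove_ne]

lemma insertCoord_sub_mem_cube_iff {i : Fin (n + 1)} {s : ℝ} {y : Fin n → ℝ}
    {v : EuclideanSpace ℝ (Fin (n + 1))} :
    insertCoord i s y - v ∈ cube (n + 1) ↔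
      |s - v i| < 1 / 2 ∧ ∀ k, |y k - v (i.succAbove k)| < 1 / 2 := by
  rw [sub_mem_cube_iff, Fin.forall_iff_succAbove i]
  simp

lemma measurePreserving_insertCoord (i : Fin (n + 1)) :
    MeasurePreserving (fun p : (Fin n → ℝ) × ℝ => insertCoord i p.2 p.1)
      (volume.prod volume) volume :=
  (PiLp.volume_preserving_toLp _).comp
    ((volume_preserving_piFinSuccAbove (fun _ => ℝ) i).symm.comp Measure.measurePreserving_swap)

lemma ae_iff_ae_ae_insertCoord (i : Fin (n + 1)) {p : EuclideanSpace ℝ (Fin (n + 1)) → Prop}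
    (hp : MeasurableSet {x | p x}) :
    (∀ᵐ x, p x) ↔ ∀ᵐ y, ∀ᵐ s, p (insertCoord i s y) := by
  have hf := measurePreserving_insertCoord (n := n) i
  rw [← hf.map_eq, ae_map_iff hf.measurable.aemeasurable hp]
  exact Measure.ae_prod_iff_ae_ae (p := fun z => p (insertCoord i z.2 z.1)) (hf.measurable hp)

end Slices

def shiftIntCoords (τ : ι → EuclideanSpace ℝ (Fin d)) (v : EuclideanSpace ℝ (Fin d))
    (S : Finset (Fin d)) (a : ι) : EuclideanSpace ℝ (Fin d) :=
  τ a + WithLp.toLp 2 fun j => if j ∈ S ∧ Int.fract (τ a j) = 0 then v j else 0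

section Shift

variable {τ : ι → EuclideanSpace ℝ (Fin d)} {v : EuclideanSpace ℝ (Fin d)}

lemma shiftIntCoords_apply (S : Finset (Fin d)) (a : ι) (j : Fin d) :
    shiftIntCoords τ v S a j = τ a j + if j ∈ S ∧ Int.fract (τ a j) = 0 then v j else 0 :=
  rfl

@[simp]
lemma shiftIntCoords_empty : shiftIntCoords τ v ∅ = τ := by
  ext a j
  simp [shiftIntCoords_apply]

lemma shiftIntCoords_singleton (i : Fin d) (a : ι) :
    shiftIntCoords τ v {i} a =
      τ a + EuclideanSpace.single i (if Int.fract (τ a i) = 0 then v i else 0) := by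
  ext j
  by_cases hj : j = i
  · subst hj; simp [shiftIntCoords_apply]
  · simp [shiftIntCoords_apply, hj]

lemma shiftIntCoords_insert {i : Fin d} {S : Finset (Fin d)} (hi : i ∉ S) :
    shiftIntCoords τ v (insert i S) = shiftIntCoords (shiftIntCoords τ v S) v {i} := by
  ext a j
  by_cases hj : j = i
  · subst hj; simp [shiftIntCoords_apply, hi]
  · simp [shiftIntCoords_apply, hj]

end Shift

namespace IsCubeTiling

variable {n : ℕ} {τ : ι → EuclideanSpace ℝ (Fin (n + 1))}

/-- The cubes meeting the line form a one-dimensional tiling of it. -/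
lemma fract_eq_of_ae_line (hτ : IsCubeTiling τ) {i : Fin (n + 1)} {y : Fin n → ℝ}
    (hy : ∀ᵐ s, cubeCount τ (insertCoord i s y) = 1) {a b : ι}
    (ha : ∀ k, |y k - τ a (i.succAbove k)| < 1 / 2)
    (hb : ∀ k, |y k - τ b (i.succAbove k)| < 1 / 2) :
    Int.fract (τ a i) = Int.fract (τ b i) := by
  let M := {a | ∀ k, |y k - τ a (i.succAbove k)| < 1 / 2}
  refine fract_eq_of_ae_cover (A := (τ · i) '' M) ?_ ?_ ⟨a, ha, rfl⟩ ⟨b, hb, rfl⟩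
  · rintro _ ⟨a, ha, rfl⟩ _ ⟨b, hb, rfl⟩ hne
    obtain ⟨j, hj⟩ := hτ.exists_one_le_abs_sub fun hab : a = b => hne (hab ▸ rfl)
    rcases Fin.eq_self_or_eq_succAbove i j with rfl | ⟨k, rfl⟩
    · exact hj
    · exact absurd hj (abs_sub_lt_one_of_abs_sub_lt_half (ha k) (hb k)).not_ge
  · filter_upwards [hy] with s hs
    obtain ⟨a, ha⟩ := exists_sub_mem_cube_of_cubeCount_eq_one hs
    rw [insertCoord_sub_mem_cube_iff] at ha
    exact ⟨_, ⟨a, ha.2, rfl⟩, ha.1⟩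

/-- On each line in direction `i`, the shift moves either all the cubes meeting the line or
none of them, so the shifted tiling restricted to the line is a translate of the original. -/
theorem shiftIntCoords_singleton [Countable ι] (hτ : IsCubeTiling τ)
    (v : EuclideanSpace ℝ (Fin (n + 1))) (i : Fin (n + 1)) :
    IsCubeTiling (shiftIntCoords τ v {i}) := by
  have hmeas (σ : ι → EuclideanSpace ℝ (Fin (n + 1))) : MeasurableSet {x | cubeCount σ x = 1} :=
    measurable_cubeCount σ (measurableSet_singleton 1)
  have hslices := (ae_iff_ae_ae_insertCoord i (hmeas τ)).mp hτ
  refine (ae_iff_ae_ae_insertCoord i (hmeas _)).mpr ?_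
  filter_upwards [hslices] with y hy
  let M := {a | ∀ k, |y k - τ a (i.succAbove k)| < 1 / 2}
  obtain ⟨c, hc⟩ : ∃ c, ∀ a ∈ M, (if Int.fract (τ a i) = 0 then v i else 0) = c := by
    rcases M.eq_empty_or_nonempty with hM | ⟨b, hb⟩
    · exact ⟨0, by simp [hM]⟩
    · exact ⟨_, fun a ha => by rw [hτ.fract_eq_of_ae_line hy ha hb]⟩
  have hcount (s : ℝ) : cubeCount (shiftIntCoords τ v {i}) (insertCoord i s y) =
      cubeCount τ (insertCoord i (s - c) y) := by
    refine tsum_congr fun a => ?_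
    rw [Keller.shiftIntCoords_singleton, sub_add_eq_sub_sub_swap, insertCoord_sub_single]
    by_cases ha : a ∈ M
    · rw [hc a ha]
    · rw [indicator_of_notMem, indicator_of_notMem] <;>
        exact fun h => ha (insertCoord_sub_mem_cube_iff.mp h).2
  simp_rw [hcount]
  exact (measurePreserving_sub_right volume c).quasiMeasurePreserving.ae hy

end IsCubeTiling

theorem IsCubeTiling.shiftIntCoords [Countable ι] {τ : ι → EuclideanSpace ℝ (Fin d)}
    (hτ : IsCubeTiling τ) (v : EuclideanSpace ℝ (Fin d)) (S : Finset (Fin d)) :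
    IsCubeTiling (shiftIntCoords τ v S) := by
  induction S using Finset.induction_on with
  | empty => rwa [shiftIntCoords_empty]
  | insert i S hi ih =>
    obtain ⟨n, rfl⟩ := Nat.exists_eq_add_one_of_ne_zero i.pos.ne'
    rw [shiftIntCoords_insert hi]
    exact ih.shiftIntCoords_singleton v i

lemma isCubeTiling_coe_of_tilesAt {Λ : Set (EuclideanSpace ℝ (Fin d))}
    (h : tilesAt ((cube d).indicator fun _ => 1) Λ 1) :
    IsCubeTiling ((↑) : Λ → EuclideanSpace ℝ (Fin d)) := by
  filter_upwards [h] with x hx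
  rw [ENNReal.ofReal_one] at hx
  refine Eq.trans (tsum_congr fun a => ?_) hx
  by_cases hxa : x - a ∈ cube d <;> simp [hxa]

end Keller

/-- Keller's theorem: if the open unit cube `Q = (-1/2, 1/2)^d` tiles `ℝ^d` when
translated by `Λ` (with `0 ∈ Λ`), then every nonzero `λ ∈ Λ` has at least one
coordinate which is a nonzero integer. -/
theorem keller {d : ℕ}
    (Q : Set (EuclideanSpace ℝ (Fin d)))
    (hQ : Q = {x : EuclideanSpace ℝ (Fin d) | ∀ j, x j ∈ Set.Ioo (-(1/2) : ℝ) (1/2)})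
    (Λ : Set (EuclideanSpace ℝ (Fin d))) (h0 : (0 : EuclideanSpace ℝ (Fin d)) ∈ Λ)
    (htile : tilesAt (Q.indicator fun _ => (1 : ℝ)) Λ 1) :
    ∀ l ∈ Λ, l ≠ 0 → ∃ j : Fin d, l j ≠ 0 ∧ ∃ n : ℤ, l j = (n : ℝ) := by
  intro l hl hl0
  by_contra! hl_int
  obtain rfl : Q = Keller.cube d := by
    rw [hQ]
    ext x
    simp [Keller.cube, abs_lt]
  have hτ := Keller.isCubeTiling_coe_of_tilesAt htile
  have := hτ.countable
  let σ := Keller.shiftIntCoords ((↑) : Λ → EuclideanSpace ℝ (Fin d)) l Finset.univ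
  have hσ0 : σ ⟨0, h0⟩ = l := by
    ext j
    simp [σ, Keller.shiftIntCoords_apply]
  have hσl : σ ⟨l, hl⟩ = l := by
    ext j
    simp only [σ, Keller.shiftIntCoords_apply, Finset.mem_univ, true_and, add_eq_left,
      ite_eq_right_iff]
    intro hj
    obtain ⟨m, hm⟩ := Int.fract_eq_zero_iff.mp hj
    by_contra hlj
    exact hl_int j hlj m hm.symm
  exact hl0 (congrArg Subtype.val ((hτ.shiftIntCoords l Finset.univ).injective
    (hσ0.trans hσl.symm))).symm
end
end

section
/- Let f : ℝ^d → ℝ be nonnegative and integrable with ∫ f > 0, let ℓ > 0, and let Λ ⊆ ℝ^d be countable such that f + Λ is a tiling of ℝ^d at level ℓ. Then Λ has asymptotic density ℓ / ∫ f, i.e., #(Λ ∩ B_R(x))/|B_R(x)| → ℓ / ∫ f as R → ∞, uniformly in x ∈ ℝ^d. -/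
/-!
Integrating the tiling identity over a ball and exchanging sum and integral gives
`ℓ |B(x, ρ)| = ∑_λ ∫_{B(x - λ, ρ)} f`. For `ρ = R + r`, every `λ ∈ B(x, R)` contributes at least
the mass `∫_{B(0, r)} f`, which bounds `#(Λ ∩ B(x, R))` from above. For `ρ = R - r`, every
`λ ∈ B(x, R)` contributes at most `∫ f`, while the points outside `B(x, R)` only see the tail
`∫_{|z| ≥ r} f`, and each `z` is seen by at most `sup_y #(Λ ∩ B(y, R - r))` of them, a number the
first bound controls. So `#(Λ ∩ B(x, R)) / |B(x, R)|` is squeezed, uniformly in `x`, between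
quantities tending to `ℓ / ∫ f` as first `R → ∞` and then `r → ∞`.
-/

open MeasureTheory Real Complex Filter Topology Metric Set Bornology ComplexConjugate
open scoped FourierTransform ENNReal RealInnerProductSpace ContDiff Classical Pointwise

noncomputable section

/-- `Λ` has asymptotic density `ρ`: `#(Λ ∩ B_R(x))/|B_R(x)| → ρ` as `R → ∞`,
uniformly in `x`. -/
def hasUniformDensity {d : ℕ} (Λ : Set (EuclideanSpace ℝ (Fin d))) (ρ : ℝ) : Prop :=
  ∀ ε : ℝ, 0 < ε → ∃ R₀ : ℝ, ∀ (x : EuclideanSpace ℝ (Fin d)) (R : ℝ), R₀ ≤ R →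
    (Λ ∩ Metric.ball x R).Finite ∧
    |(Nat.card ↥(Λ ∩ Metric.ball x R) : ℝ) / (volume (Metric.ball x R)).toReal - ρ| ≤ ε

theorem tsum_indicator_one_eq_encard {α : Type*} (Λ S : Set α) :
    ∑' l : Λ, S.indicator 1 (l : α) = ((Λ ∩ S).encard : ℝ≥0∞) := by
  rw [tsum_subtype Λ (S.indicator 1), indicator_indicator, ← tsum_subtype, ← ENNReal.tsum_set_one]
  rfl

section Balls

variable {E : Type*} [NormedAddCommGroup E]

theorem mem_ball_sub_comm (x y z : E) (ρ : ℝ) : y ∈ ball (x - z) ρ ↔ z ∈ ball (x - y) ρ := by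
  rw [mem_ball, mem_ball, dist_eq_norm, dist_eq_norm, sub_sub_eq_add_sub, sub_sub_eq_add_sub,
    add_comm]

theorem ball_sub_subset_compl_ball {x y : E} {R r : ℝ} (hy : y ∉ ball x R) :
    ball (x - y) (R - r) ⊆ (ball 0 r)ᶜ := by
  refine subset_compl_iff_disjoint_right.2 (ball_disjoint_ball ?_)
  rw [sub_add_cancel, dist_zero_right, ← dist_eq_norm, dist_comm]
  simpa using hy

end Balls

section Counting

variable {E : Type*} [NormedAddCommGroup E] [MeasurableSpace E] [BorelSpace E]
  {μ : Measure E} [μ.IsAddRightInvariant] {g : E → ℝ≥0∞} {Λ : Set E} [Countable Λ] {c : ℝ≥0∞}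

variable (μ) in
theorem setLIntegral_ball_comp_sub (g : E → ℝ≥0∞) (x a : E) (R : ℝ) :
    ∫⁻ y in ball x R, g (y - a) ∂μ = ∫⁻ z in ball (x - a) R, g z ∂μ := by
  rw [← (measurePreserving_add_right μ a).setLIntegral_comp_preimage_emb
    (measurableEmbedding_addRight a), preimage_add_right_ball]
  simp_rw [add_sub_cancel_right]

theorem tsum_setLIntegral_comp_sub_eq (hg : AEMeasurable g μ)
    (htile : ∀ᵐ y ∂μ, ∑' l : Λ, g (y - l) = c) (S : Set E) :
    ∑' l : Λ, ∫⁻ y in S, g (y - l) ∂μ = c * μ S := by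
  have hmeas (a : E) : AEMeasurable (fun y => g (y - a)) μ :=
    hg.comp_quasiMeasurePreserving (measurePreserving_sub_right μ a).quasiMeasurePreserving
  rw [← lintegral_tsum fun l : Λ => (hmeas l).restrict, ← setLIntegral_const]
  exact lintegral_congr_ae (ae_restrict_of_ae htile)

theorem encard_inter_ball_mul_le (hg : AEMeasurable g μ)
    (htile : ∀ᵐ y ∂μ, ∑' l : Λ, g (y - l) = c) (x : E) (R r : ℝ) :
    (Λ ∩ ball x R).encard * ∫⁻ z in ball 0 r, g z ∂μ ≤ c * μ (ball x (R + r)) := by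
  rw [← tsum_indicator_one_eq_encard, ← ENNReal.tsum_mul_right,
    ← tsum_setLIntegral_comp_sub_eq hg htile]
  refine ENNReal.tsum_le_tsum fun l => ?_
  rw [setLIntegral_ball_comp_sub]
  by_cases hl : (l : E) ∈ ball x R
  · rw [indicator_of_mem hl, Pi.one_apply, one_mul]
    refine lintegral_mono_set (ball_subset_ball' ?_)
    rw [dist_zero_left, ← dist_eq_norm, dist_comm]
    linarith [mem_ball.1 hl]
  · simp [indicator_of_notMem hl]

theorem mul_measure_ball_sub_le (hg : AEMeasurable g μ)
    (htile : ∀ᵐ y ∂μ, ∑' l : Λ, g (y - l) = c) {K : ℝ≥0∞} (x : E) (R r : ℝ)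
    (hK : ∀ y, ((Λ ∩ ball y (R - r)).encard : ℝ≥0∞) ≤ K) :
    c * μ (ball x (R - r)) ≤
      (Λ ∩ ball x R).encard * ∫⁻ z, g z ∂μ + K * ∫⁻ z in (ball 0 r)ᶜ, g z ∂μ := by
  set far : Λ → E → ℝ≥0∞ := fun l => ((ball 0 r)ᶜ ∩ ball (x - l) (R - r)).indicator g
  have hterm (l : Λ) : ∫⁻ y in ball x (R - r), g (y - l) ∂μ ≤
      (ball x R).indicator 1 (l : E) * ∫⁻ z, g z ∂μ + ∫⁻ z, far l z ∂μ := by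
    rw [setLIntegral_ball_comp_sub]
    by_cases hl : (l : E) ∈ ball x R
    · rw [indicator_of_mem hl, Pi.one_apply, one_mul]
      exact le_add_right (setLIntegral_le_lintegral _ _)
    · rw [indicator_of_notMem hl, zero_mul, zero_add,
        lintegral_indicator (measurableSet_ball.compl.inter measurableSet_ball),
        inter_eq_right.2 (ball_sub_subset_compl_ball hl)]
  have hfar (z : E) : ∑' l : Λ, far l z ≤ (ball 0 r)ᶜ.indicator g z * K := by
    have (l : Λ) : far l z = (ball 0 r)ᶜ.indicator g z * (ball (x - z) (R - r)).indicator 1 l := by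
      simp only [far, indicator_apply, mem_inter_iff, mem_ball_sub_comm x l z, Pi.one_apply]
      split_ifs <;> simp_all
    simp_rw [this, ENNReal.tsum_mul_left, tsum_indicator_one_eq_encard]
    gcongr
    exact hK _
  have hfar_meas (l : Λ) : AEMeasurable (far l) μ :=
    hg.indicator (measurableSet_ball.compl.inter measurableSet_ball)
  calc c * μ (ball x (R - r))
      = ∑' l : Λ, ∫⁻ y in ball x (R - r), g (y - l) ∂μ :=
        (tsum_setLIntegral_comp_sub_eq hg htile _).symm
    _ ≤ ∑' l : Λ, ((ball x R).indicator 1 (l : E) * ∫⁻ z, g z ∂μ + ∫⁻ z, far l z ∂μ) :=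
        ENNReal.tsum_le_tsum hterm
    _ = (Λ ∩ ball x R).encard * ∫⁻ z, g z ∂μ + ∫⁻ z, ∑' l : Λ, far l z ∂μ := by
        rw [ENNReal.tsum_add, ENNReal.tsum_mul_right, tsum_indicator_one_eq_encard,
          lintegral_tsum hfar_meas]
    _ ≤ (Λ ∩ ball x R).encard * ∫⁻ z, g z ∂μ + ∫⁻ z, (ball 0 r)ᶜ.indicator g z * K ∂μ := by
        gcongr with z
        exact hfar z
    _ = (Λ ∩ ball x R).encard * ∫⁻ z, g z ∂μ + K * ∫⁻ z in (ball 0 r)ᶜ, g z ∂μ := by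
        rw [lintegral_mul_const'' K (hg.indicator measurableSet_ball.compl),
          lintegral_indicator measurableSet_ball.compl, mul_comm K]

end Counting

theorem Set.Finite.toENNReal_encard {α : Type*} {s : Set α} (hs : s.Finite) :
    (s.encard : ℝ≥0∞) = Nat.card s := by
  rw [← hs.cast_ncard_eq, Nat.card_coe_set_eq, ENat.toENNReal_coe]

theorem tendsto_setIntegral_ball_atTop {X G : Type*} [PseudoMetricSpace X] [MeasurableSpace X]
    [OpensMeasurableSpace X] [NormedAddCommGroup G] [NormedSpace ℝ G] {μ : Measure X}
    {f : X → G} (hf : Integrable f μ) (x : X) :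
    Tendsto (fun r => ∫ z in ball x r, f z ∂μ) atTop (𝓝 (∫ z, f z ∂μ)) := by
  have hcover : ⋃ r : ℝ, ball x r = univ :=
    eq_univ_of_forall fun z => mem_iUnion.2 ⟨dist z x + 1, mem_ball.2 (lt_add_one _)⟩
  have h := tendsto_setIntegral_of_monotone (μ := μ) (f := f) (fun r => measurableSet_ball)
    (fun _ _ h => ball_subset_ball h) (by rw [hcover]; exact hf.integrableOn)
  rwa [hcover, setIntegral_univ] at h

section Density

variable {E : Type*} [NormedAddCommGroup E] [NormedSpace ℝ E] [FiniteDimensional ℝ E]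
  [MeasurableSpace E] [BorelSpace E] {μ : Measure E} [μ.IsAddHaarMeasure]
  {f : E → ℝ} {ℓ : ℝ} {Λ : Set E} [Countable Λ]

variable (μ) in
theorem toReal_addHaar_ball (x : E) {R : ℝ} (hR : 0 < R) :
    (μ (ball x R)).toReal = R ^ Module.finrank ℝ E * (μ (ball 0 1)).toReal := by
  rw [Measure.addHaar_ball_of_pos μ x hR, ENNReal.toReal_mul,
    ENNReal.toReal_ofReal (pow_nonneg hR.le _)]

theorem inter_ball_finite (hf0 : ∀ x, 0 ≤ f x) (hfi : Integrable f μ) (hfpos : 0 < ∫ z, f z ∂μ)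
    (htile : ∀ᵐ y ∂μ, ∑' l : Λ, ENNReal.ofReal (f (y - l)) = ENNReal.ofReal ℓ) (x : E) (R : ℝ) :
    (Λ ∩ ball x R).Finite := by
  obtain ⟨r, hr⟩ := ((tendsto_setIntegral_ball_atTop hfi 0).eventually_const_lt hfpos).exists
  have h := encard_inter_ball_mul_le hfi.aemeasurable.ennreal_ofReal htile x R r
  rw [← ofReal_integral_eq_lintegral_ofReal hfi.integrableOn (ae_of_all _ fun z => hf0 z)] at h
  rw [← encard_ne_top_iff]
  intro htop
  rw [htop, ENat.toENNReal_top, ENNReal.top_mul (ENNReal.ofReal_pos.2 hr).ne'] at h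
  exact (ENNReal.mul_ne_top ENNReal.ofReal_ne_top measure_ball_lt_top.ne) (top_le_iff.1 h)

theorem natCard_inter_ball_mul_le (hf0 : ∀ x, 0 ≤ f x) (hfi : Integrable f μ)
    (hfpos : 0 < ∫ z, f z ∂μ) (hℓ : 0 ≤ ℓ)
    (htile : ∀ᵐ y ∂μ, ∑' l : Λ, ENNReal.ofReal (f (y - l)) = ENNReal.ofReal ℓ) (x : E) (R r : ℝ) :
    (Nat.card ↥(Λ ∩ ball x R) : ℝ) * ∫ z in ball 0 r, f z ∂μ ≤
      ℓ * (μ (ball x (R + r))).toReal := by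
  have h := encard_inter_ball_mul_le hfi.aemeasurable.ennreal_ofReal htile x R r
  rw [(inter_ball_finite hf0 hfi hfpos htile x R).toENNReal_encard,
    ← ofReal_integral_eq_lintegral_ofReal hfi.integrableOn (ae_of_all _ fun z => hf0 z)] at h
  have := ENNReal.toReal_mono (ENNReal.mul_ne_top ENNReal.ofReal_ne_top measure_ball_lt_top.ne) h
  rwa [ENNReal.toReal_mul, ENNReal.toReal_mul, ENNReal.toReal_natCast, ENNReal.toReal_ofReal hℓ,
    ENNReal.toReal_ofReal (setIntegral_nonneg measurableSet_ball fun z _ => hf0 z)] at this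

theorem mul_measure_ball_sub_le_natCard (hf0 : ∀ x, 0 ≤ f x) (hfi : Integrable f μ)
    (hfpos : 0 < ∫ z, f z ∂μ) (hℓ : 0 ≤ ℓ)
    (htile : ∀ᵐ y ∂μ, ∑' l : Λ, ENNReal.ofReal (f (y - l)) = ENNReal.ofReal ℓ) {K : ℝ}
    (x : E) (R r : ℝ) (hK : ∀ y, (Nat.card ↥(Λ ∩ ball y (R - r)) : ℝ) ≤ K) :
    ℓ * (μ (ball x (R - r))).toReal ≤
      Nat.card ↥(Λ ∩ ball x R) * ∫ z, f z ∂μ + K * ∫ z in (ball 0 r)ᶜ, f z ∂μ := by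
  have hfin := inter_ball_finite hf0 hfi hfpos htile
  have hK0 : 0 ≤ K := (Nat.cast_nonneg _).trans (hK x)
  have hF0 : 0 ≤ ∫ z, f z ∂μ := integral_nonneg hf0
  have htail0 : 0 ≤ ∫ z in (ball 0 r)ᶜ, f z ∂μ :=
    setIntegral_nonneg measurableSet_ball.compl fun z _ => hf0 z
  have hK' (y : E) : ((Λ ∩ ball y (R - r)).encard : ℝ≥0∞) ≤ ENNReal.ofReal K := by
    rw [(hfin y _).toENNReal_encard, ← ENNReal.ofReal_natCast]
    exact ENNReal.ofReal_le_ofReal (hK y)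
  have h := mul_measure_ball_sub_le hfi.aemeasurable.ennreal_ofReal htile x R r hK'
  rw [(hfin x R).toENNReal_encard, ← ENNReal.ofReal_natCast,
    ← ofReal_integral_eq_lintegral_ofReal hfi (ae_of_all _ fun z => hf0 z),
    ← ofReal_integral_eq_lintegral_ofReal hfi.integrableOn (ae_of_all _ fun z => hf0 z),
    ← ENNReal.ofReal_mul (Nat.cast_nonneg _), ← ENNReal.ofReal_mul hK0,
    ← ENNReal.ofReal_add (by positivity) (by positivity)] at h
  rw [← ENNReal.toReal_ofReal hℓ, ← ENNReal.toReal_mul]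
  exact ENNReal.toReal_le_of_le_ofReal (by positivity) h

theorem natCard_div_measure_ball_le (hf0 : ∀ x, 0 ≤ f x) (hfi : Integrable f μ)
    (hfpos : 0 < ∫ z, f z ∂μ) (hℓ : 0 ≤ ℓ)
    (htile : ∀ᵐ y ∂μ, ∑' l : Λ, ENNReal.ofReal (f (y - l)) = ENNReal.ofReal ℓ) (x : E)
    {R r : ℝ} (hR : 0 < R) (hr : 0 < r) (hm : 0 < ∫ z in ball 0 r, f z ∂μ) :
    (Nat.card ↥(Λ ∩ ball x R) : ℝ) / (μ (ball x R)).toReal ≤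
      ℓ / (∫ z in ball 0 r, f z ∂μ) * (1 + r / R) ^ Module.finrank ℝ E := by
  have h := natCard_inter_ball_mul_le hf0 hfi hfpos hℓ htile x R r
  have hv : 0 < (μ (ball (0 : E) 1)).toReal :=
    ENNReal.toReal_pos (measure_ball_pos μ 0 one_pos).ne' measure_ball_lt_top.ne
  rw [toReal_addHaar_ball μ x (by positivity)] at h
  rw [toReal_addHaar_ball μ x hR, div_le_iff₀ (by positivity)]
  calc _ ≤ ℓ * ((R + r) ^ Module.finrank ℝ E * (μ (ball (0 : E) 1)).toReal) /
        ∫ z in ball 0 r, f z ∂μ := (le_div_iff₀ hm).2 h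
    _ = _ := by rw [one_add_div hR.ne', div_pow]; field_simp

theorem le_natCard_div_measure_ball (hf0 : ∀ x, 0 ≤ f x) (hfi : Integrable f μ)
    (hfpos : 0 < ∫ z, f z ∂μ) (hℓ : 0 ≤ ℓ)
    (htile : ∀ᵐ y ∂μ, ∑' l : Λ, ENNReal.ofReal (f (y - l)) = ENNReal.ofReal ℓ) (x : E)
    {R r : ℝ} (hr : 0 < r) (hrR : r < R) (hm : 0 < ∫ z in ball 0 r, f z ∂μ) :
    ℓ / (∫ z, f z ∂μ) * (1 - r / R) ^ Module.finrank ℝ E -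
        ℓ / (∫ z, f z ∂μ) * ((∫ z, f z ∂μ) / (∫ z in ball 0 r, f z ∂μ) - 1) ≤
      (Nat.card ↥(Λ ∩ ball x R) : ℝ) / (μ (ball x R)).toReal := by
  set d := Module.finrank ℝ E
  set v := (μ (ball (0 : E) 1)).toReal
  set F := ∫ z, f z ∂μ
  set m := ∫ z in ball 0 r, f z ∂μ
  have hR : 0 < R := hr.trans hrR
  have hv : 0 < v := ENNReal.toReal_pos (measure_ball_pos μ 0 one_pos).ne' measure_ball_lt_top.ne
  have hK (y : E) : (Nat.card ↥(Λ ∩ ball y (R - r)) : ℝ) ≤ ℓ * (R ^ d * v) / m := by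
    have h := natCard_inter_ball_mul_le hf0 hfi hfpos hℓ htile y (R - r) r
    rw [sub_add_cancel, toReal_addHaar_ball μ y hR] at h
    exact (le_div_iff₀ hm).2 h
  have htail : ∫ z in (ball 0 r)ᶜ, f z ∂μ = F - m := by
    linarith [integral_add_compl (measurableSet_ball (x := (0 : E)) (ε := r)) hfi]
  have h := mul_measure_ball_sub_le_natCard hf0 hfi hfpos hℓ htile x R r hK
  rw [toReal_addHaar_ball μ x (sub_pos.2 hrR), htail] at h
  rw [toReal_addHaar_ball μ x hR, le_div_iff₀ (by positivity)]
  calc _ = (ℓ * ((R - r) ^ d * v) - ℓ * (R ^ d * v) / m * (F - m)) / F := by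
        rw [one_sub_div hR.ne', div_pow]; field_simp; ring
    _ ≤ Nat.card ↥(Λ ∩ ball x R) * F / F := by gcongr; linarith
    _ = _ := mul_div_cancel_right₀ _ hfpos.ne'

theorem eventually_forall_abs_sub_le_of_squeeze {ι α β : Type*} {p : Filter α} [p.NeBot]
    {q : Filter β} {a : ι → β → ℝ} {lo up : α → β → ℝ} {lo' up' : α → ℝ} {ρ ε : ℝ}
    (hε : 0 < ε) (hlo : ∀ r, Tendsto (lo r) q (𝓝 (lo' r)))
    (hup : ∀ r, Tendsto (up r) q (𝓝 (up' r))) (hlo' : Tendsto lo' p (𝓝 ρ))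
    (hup' : Tendsto up' p (𝓝 ρ))
    (hsq : ∀ᶠ r in p, ∀ᶠ R in q, ∀ i, lo r R ≤ a i R ∧ a i R ≤ up r R) :
    ∀ᶠ R in q, ∀ i, |a i R - ρ| ≤ ε := by
  obtain ⟨r, hr_lo, hr_up, hr⟩ := ((hlo'.eventually_const_lt (sub_lt_self ρ hε)).and
    ((hup'.eventually_lt_const (lt_add_of_pos_right ρ hε)).and hsq)).exists
  filter_upwards [hr, (hlo r).eventually_const_lt hr_lo, (hup r).eventually_lt_const hr_up]
    with R hR hR_lo hR_up i
  rw [abs_le]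
  constructor <;> linarith [hR i]

theorem eventually_forall_abs_natCard_div_measure_ball_sub_le (hf0 : ∀ x, 0 ≤ f x)
    (hfi : Integrable f μ) (hfpos : 0 < ∫ z, f z ∂μ) (hℓ : 0 ≤ ℓ)
    (htile : ∀ᵐ y ∂μ, ∑' l : Λ, ENNReal.ofReal (f (y - l)) = ENNReal.ofReal ℓ) {ε : ℝ}
    (hε : 0 < ε) :
    ∀ᶠ R in atTop, ∀ x : E,
      |(Nat.card ↥(Λ ∩ ball x R) : ℝ) / (μ (ball x R)).toReal - ℓ / ∫ z, f z ∂μ| ≤ ε := by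
  set d := Module.finrank ℝ E
  set F := ∫ z, f z ∂μ
  set m := fun r => ∫ z in ball 0 r, f z ∂μ
  have hm : Tendsto m atTop (𝓝 F) := tendsto_setIntegral_ball_atTop hfi 0
  have hdiv (r : ℝ) : Tendsto (fun R => r / R) atTop (𝓝 0) :=
    tendsto_const_nhds.div_atTop tendsto_id
  refine eventually_forall_abs_sub_le_of_squeeze (p := atTop) hε
    (lo := fun r R => ℓ / F * (1 - r / R) ^ d - ℓ / F * (F / m r - 1))
    (up := fun r R => ℓ / m r * (1 + r / R) ^ d) (lo' := fun r => ℓ / F - ℓ / F * (F / m r - 1))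
    (up' := fun r => ℓ / m r) (fun r => ?_) (fun r => ?_) ?_ ?_ ?_
  · simpa using ((((tendsto_const_nhds (x := 1)).sub (hdiv r)).pow d).const_mul (ℓ / F)).sub_const
      (ℓ / F * (F / m r - 1))
  · simpa using (((tendsto_const_nhds (x := 1)).add (hdiv r)).pow d).const_mul (ℓ / m r)
  · have hFm : Tendsto (fun r => F / m r) atTop (𝓝 1) := by
      rw [← div_self hfpos.ne']
      exact (tendsto_const_nhds (x := F)).div hm hfpos.ne'
    simpa using ((hFm.sub_const 1).const_mul (ℓ / F)).const_sub (ℓ / F)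
  · exact tendsto_const_nhds.div hm hfpos.ne'
  · filter_upwards [hm.eventually_const_lt hfpos, eventually_gt_atTop 0] with r hmr hr
    filter_upwards [eventually_gt_atTop r] with R hrR x
    exact ⟨le_natCard_div_measure_ball hf0 hfi hfpos hℓ htile x hr hrR hmr,
      natCard_div_measure_ball_le hf0 hfi hfpos hℓ htile x (hr.trans hrR) hr hmr⟩

end Density

/-- If `f ≥ 0` is integrable with `∫f > 0` and `f + Λ` tiles `ℝ^d` at level `ℓ > 0`,
then `Λ` has asymptotic density `ℓ / ∫f`, uniformly in the centre of the balls. -/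
theorem tiling_density {d : ℕ}
    (f : EuclideanSpace ℝ (Fin d) → ℝ)
    (hf0 : ∀ x, 0 ≤ f x) (hfi : Integrable f) (hfpos : 0 < ∫ x, f x)
    (ℓ : ℝ) (hℓ : 0 < ℓ)
    (Λ : Set (EuclideanSpace ℝ (Fin d))) (hΛ : Λ.Countable)
    (htile : tilesAt f Λ ℓ) :
    hasUniformDensity Λ (ℓ / ∫ x, f x) := by
  have := hΛ.to_subtype
  intro ε hε
  obtain ⟨R₀, hR₀⟩ := eventually_atTop.1
    (eventually_forall_abs_natCard_div_measure_ball_sub_le hf0 hfi hfpos hℓ.le htile hε)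
  exact ⟨R₀, fun x R hR => ⟨inter_ball_finite hf0 hfi hfpos htile x R, hR₀ R hR x⟩⟩
end
end
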